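/- Let η_len, η ∈ ℝ³ with ‖η_len‖ = 1 and ‖η‖ = 1, and let n > 0 with ‖η_len × η‖² ≤ n². Define η_ref = (1/n)·(η_len × (η_len × η)) − √(1 − (1/n²)·((η_len × η)·(η_len × η)))·η_len. Then ‖η_len × η_ref‖ = (1/n)·‖η_len × η‖; that is, the sine of the angle between the refracted ray and the lens normal equals 1/n times the sine of the angle of incidence. -/

import Mathlib

/-
The refracted direction is a combination of `η_len × (η_len × η)` and `η_len`. Crossing with
`η_len` kills the `η_len` term and, by the expansion of the vector triple product,
turns `η_len × (η_len × η)` into `-(η_len × η)` for a unit normal. So `η_len × η_ref = -(1/n) (η_len × η)`.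
-/

open Real Matrix

/-- The Euclidean norm of a vector in `ℝ³`. -/
noncomputable def enorm3 (v : Fin 3 → ℝ) : ℝ :=
  ‖(WithLp.equiv 2 (Fin 3 → ℝ)).symm v‖

lemma enorm3_sq (v : Fin 3 → ℝ) : enorm3 v ^ 2 = v ⬝ᵥ v := by
  rw [enorm3, EuclideanSpace.norm_sq_eq, dotProduct]
  simp [sq]

lemma enorm3_smul (c : ℝ) (v : Fin 3 → ℝ) : enorm3 (c • v) = |c| * enorm3 v := by
  simpa [enorm3] using norm_smul c ((WithLp.equiv 2 (Fin 3 → ℝ)).symm v)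

section CrossProduct

variable {R : Type*} [CommRing R]

theorem cross_cross_cross_self (u v : Fin 3 → R) :
    u ⨯₃ (u ⨯₃ (u ⨯₃ v)) = -(u ⬝ᵥ u) • (u ⨯₃ v) := by
  rw [cross_cross_eq_smul_sub_smul', dot_self_cross, zero_smul, zero_sub, neg_smul]

theorem cross_smul_cross_cross_sub_smul_self (u v : Fin 3 → R) (c d : R) :
    u ⨯₃ (c • (u ⨯₃ (u ⨯₃ v)) - d • u) = -(c * (u ⬝ᵥ u)) • (u ⨯₃ v) := by
  rw [map_sub, _root_.map_smul, _root_.map_smul, cross_self, smul_zero, sub_zero,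
    cross_cross_cross_self, smul_smul, mul_neg]

end CrossProduct

theorem snell_law_sine_ratio_general (ηlen η : Fin 3 → ℝ) (n : ℝ)
    (hlen : enorm3 ηlen = 1) (hn : 0 < n) :
    enorm3 (ηlen ⨯₃ ((1 / n) • (ηlen ⨯₃ (ηlen ⨯₃ η))
        - Real.sqrt (1 - (1 / n ^ 2) * ((ηlen ⨯₃ η) ⬝ᵥ (ηlen ⨯₃ η))) • ηlen)) =
      (1 / n) * enorm3 (ηlen ⨯₃ η) := by
  have hunit : ηlen ⬝ᵥ ηlen = 1 := by rw [← enorm3_sq, hlen, one_pow]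
  rw [cross_smul_cross_cross_sub_smul_self, hunit, mul_one, enorm3_smul, abs_neg,
    abs_of_pos (one_div_pos.mpr hn)]

theorem snell_law_sine_ratio (ηlen η : Fin 3 → ℝ) (n : ℝ)
    (hlen : enorm3 ηlen = 1) (hη : enorm3 η = 1) (hn : 0 < n)
    (hcross : enorm3 (ηlen ⨯₃ η) ^ 2 ≤ n ^ 2) :
    enorm3 (ηlen ⨯₃ ((1 / n) • (ηlen ⨯₃ (ηlen ⨯₃ η))
        - Real.sqrt (1 - (1 / n ^ 2) * ((ηlen ⨯₃ η) ⬝ᵥ (ηlen ⨯₃ η))) • ηlen)) =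
      (1 / n) * enorm3 (ηlen ⨯₃ η) :=
  snell_law_sine_ratio_general ηlen η n hlen hn
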